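/- Let K be a field and ν a valuation on K[x]. If Q ∈ K[x] is a key polynomial for ν, then the Q-truncation ν_Q is a valuation on K[x]. -/

import Mathlib

/-!
Everything reduces to products `a * b` of polynomials of degree `< deg Q`. Write
`a * b = r + Q * s` with `deg r, deg s < deg Q`; then `ν(r) = ν(a b) < ν(Q s)` unless `s = 0`.
Indeed, let `e = ε(Q)`, attained at `b₀`. By the key polynomial property every nonzero `h` of
degree `< deg Q` has `ν(h) < ν(∂_b h) + b e` for `b ≥ 1`, a condition stable under products by the
Leibniz rule, so `ν(a b) < ν(∂_{b₀}(a b)) + b₀ e`. If we had `ν(Q s) ≤ ν(r)`, the Leibniz rule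
applied to `∂_{b₀}(Q s)` would give `ν(∂_{b₀}(a b)) + b₀ e = ν(Q s) ≤ ν(a b)`.

Expanding `f = ∑ fᵢ Qⁱ` and `g = ∑ gⱼ Qʲ`, this gives `ν_Q(f g) ≥ ν_Q(f) + ν_Q(g)` term by term.
For equality, take the first indices `i`, `j` at which `ν_Q(f)`, `ν_Q(g)` are attained: the
`Q^(i+j)`-coefficient of `f g` is `fᵢ gⱼ mod Q` plus terms of larger value.
-/

open Polynomial

/-- A valuation on a commutative ring `R` with values in `Γ ∪ {∞}`. -/
def IsVal {R : Type*} [CommRing R] {Γ : Type*} [AddCommGroup Γ] [LinearOrder Γ] [IsOrderedAddMonoid Γ]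
    (v : R → WithTop Γ) : Prop :=
  (∀ a b, v (a * b) = v a + v b) ∧
  (∀ a b, min (v a) (v b) ≤ v (a + b)) ∧
  v 1 = 0 ∧ v 0 = ⊤

/-- The `i`-th coefficient of the `q`-expansion of `f`. -/
noncomputable def qCoeff {K : Type*} [Field K] (q f : K[X]) (i : ℕ) : K[X] :=
  (f /ₘ q ^ i) %ₘ q

/-- The `q`-truncation `ν_q` of a valuation `ν` on `K[x]`. -/
noncomputable def trunc {K : Type*} [Field K] {Γ : Type*} [AddCommGroup Γ] [LinearOrder Γ] [IsOrderedAddMonoid Γ]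
    (v : K[X] → WithTop Γ) (q : K[X]) (f : K[X]) : WithTop Γ :=
  (Finset.range (f.natDegree + 1)).inf fun i => v (qCoeff q f i * q ^ i)

/-- The quantity `(ν(f) - ν(∂_b f))/b`, an element of `Γ ∪ {±∞}`. -/
noncomputable def epsAt {K : Type*} [Field K] {Γ : Type*} [AddCommGroup Γ] [LinearOrder Γ] [IsOrderedAddMonoid Γ]
    [Module ℚ Γ] (v : K[X] → WithTop Γ) (f : K[X]) (b : ℕ) : WithBot (WithTop Γ) :=
  if h : v (hasseDeriv b f) = ⊤ then ⊥
  else (((v f).map fun c => (b : ℚ)⁻¹ • (c - (v (hasseDeriv b f)).untop h) : WithTop Γ) :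
    WithBot (WithTop Γ))

/-- `ε(f) = max_b (ν(f) - ν(∂_b f))/b` over positive integers `b`. -/
noncomputable def eps {K : Type*} [Field K] {Γ : Type*} [AddCommGroup Γ] [LinearOrder Γ] [IsOrderedAddMonoid Γ]
    [Module ℚ Γ] (v : K[X] → WithTop Γ) (f : K[X]) : WithBot (WithTop Γ) :=
  (Finset.Icc 1 f.natDegree).sup (epsAt v f)

/-- A (Spivakovsky) key polynomial for `ν`. -/
def IsKeyPoly {K : Type*} [Field K] {Γ : Type*} [AddCommGroup Γ] [LinearOrder Γ] [IsOrderedAddMonoid Γ]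
    [Module ℚ Γ] (v : K[X] → WithTop Γ) (Q : K[X]) : Prop :=
  Q.Monic ∧ ∀ f : K[X], eps v Q ≤ eps v f → Q.degree ≤ f.degree

/-- `f` and `g` have the same initial form in the graded algebra of `ν`. -/
def EquivIn {K : Type*} [Field K] {Γ : Type*} [AddCommGroup Γ] [LinearOrder Γ] [IsOrderedAddMonoid Γ]
    (v : K[X] → WithTop Γ) (f g : K[X]) : Prop :=
  v f = v g ∧ (v f < v (f - g) ∨ v f = ⊤)

/-- `g` ν-divides `f`. -/
def DvdIn {K : Type*} [Field K] {Γ : Type*} [AddCommGroup Γ] [LinearOrder Γ] [IsOrderedAddMonoid Γ]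
    (v : K[X] → WithTop Γ) (g f : K[X]) : Prop :=
  ∃ h : K[X], EquivIn v f (g * h)

/-- A MacLane–Vaquié key polynomial for `ν`. -/
def IsMVKeyPoly {K : Type*} [Field K] {Γ : Type*} [AddCommGroup Γ] [LinearOrder Γ] [IsOrderedAddMonoid Γ]
    (v : K[X] → WithTop Γ) (φ : K[X]) : Prop :=
  φ.Monic ∧
  (∀ f g : K[X], DvdIn v φ (f * g) → DvdIn v φ f ∨ DvdIn v φ g) ∧
  (∀ f : K[X], DvdIn v φ f → φ.degree ≤ f.degree)

/-- `α(Q)`: the minimal degree of a polynomial on which `ν_Q` differs from `ν`. -/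
noncomputable def alphaDeg {K : Type*} [Field K] {Γ : Type*} [AddCommGroup Γ] [LinearOrder Γ] [IsOrderedAddMonoid Γ]
    (v : K[X] → WithTop Γ) (Q : K[X]) : ℕ :=
  sInf {d | ∃ f : K[X], f.natDegree = d ∧ trunc v Q f < v f}

/-- `Ψ(Q)`: monic polynomials of degree `α(Q)` with `ν_Q(f) < ν(f)`. -/
def Psi {K : Type*} [Field K] {Γ : Type*} [AddCommGroup Γ] [LinearOrder Γ] [IsOrderedAddMonoid Γ]
    (v : K[X] → WithTop Γ) (Q : K[X]) : Set K[X] :=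
  {f | f.Monic ∧ trunc v Q f < v f ∧ f.natDegree = alphaDeg v Q}

open Finset

def IsVal.toAddValuation {R : Type*} [CommRing R] {Γ : Type*} [AddCommGroup Γ] [LinearOrder Γ]
    [IsOrderedAddMonoid Γ] {v : R → WithTop Γ} (hv : IsVal v) : AddValuation R (WithTop Γ) :=
  AddValuation.of v hv.2.2.2 hv.2.2.1 hv.2.1 hv.1

namespace AddValuation

variable {R Γ₀ : Type*} [Ring R] [LinearOrderedAddCommMonoidWithTop Γ₀] (v : AddValuation R Γ₀)

theorem lt_map_sum_add {ι : Type*} {s : Finset ι} {f : ι → R} {t c : Γ₀} (ht : t ≠ ⊤)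
    (h : ∀ i ∈ s, t < v (f i) + c) : t < v (∑ i ∈ s, f i) + c := by
  induction s using Finset.cons_induction with
  | empty => simpa using ht.lt_top
  | cons i s hi ih =>
    rw [sum_cons]
    calc t < min (v (f i)) (v (∑ j ∈ s, f j)) + c := by
          rw [← min_add_add_right]
          exact lt_min (h i (mem_cons_self i s)) (ih fun j hj => h j (mem_cons_of_mem hj))
      _ ≤ v (f i + ∑ j ∈ s, f j) + c := by gcongr; exact v.map_add _ _

variable {Γ : Type*} [AddCommGroup Γ] [LinearOrder Γ] [IsOrderedAddMonoid Γ]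
  (w : AddValuation R (WithTop Γ))

theorem map_ne_top_of_isUnit {x : R} (hx : IsUnit x) : w x ≠ ⊤ := by
  obtain ⟨u, rfl⟩ := hx
  intro h
  have := w.map_mul u ↑u⁻¹
  rw [u.mul_inv, w.map_one, h, top_add] at this
  exact WithTop.zero_ne_top this

theorem map_add_add_eq_of_lt {x y : R} {t c : WithTop Γ} (hc : c ≠ ⊤) (hx : w x + c = t)
    (hy : t < w y + c) : w (x + y) + c = t := by
  rw [← hx, WithTop.add_lt_add_iff_right hc] at hy
  rw [w.map_add_eq_of_lt_left hy, hx]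

end AddValuation

theorem inv_natCast_smul_le_iff {Γ : Type*} [AddCommGroup Γ] [LinearOrder Γ]
    [IsOrderedAddMonoid Γ] [Module ℚ Γ] {b : ℕ} (hb : b ≠ 0) {x y : Γ} :
    (b : ℚ)⁻¹ • x ≤ y ↔ x ≤ b • y := by
  rw [← nsmul_le_nsmul_iff_right hb, ← Nat.cast_smul_eq_nsmul ℚ b, smul_smul,
    mul_inv_cancel₀ (Nat.cast_ne_zero.2 hb), one_smul]

theorem inv_natCast_smul_lt_iff {Γ : Type*} [AddCommGroup Γ] [LinearOrder Γ]
    [IsOrderedAddMonoid Γ] [Module ℚ Γ] {b : ℕ} (hb : b ≠ 0) {x y : Γ} :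
    (b : ℚ)⁻¹ • x < y ↔ x < b • y := by
  rw [← (nsmul_right_strictMono (M := Γ) hb).lt_iff_lt, ← Nat.cast_smul_eq_nsmul ℚ b, smul_smul,
    mul_inv_cancel₀ (Nat.cast_ne_zero.2 hb), one_smul]

namespace Polynomial

variable {R : Type*} [CommRing R] {p q : R[X]}

theorem add_divByMonic (hq : q.Monic) (f g : R[X]) : (f + g) /ₘ q = f /ₘ q + g /ₘ q := by
  nontriviality R
  refine (div_modByMonic_unique _ (f %ₘ q + g %ₘ q) hq ⟨?_, ?_⟩).1
  · rw [mul_add, add_add_add_comm, modByMonic_add_div, modByMonic_add_div]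
  · exact (degree_add_le _ _).trans_lt
      (max_lt (degree_modByMonic_lt _ hq) (degree_modByMonic_lt _ hq))

theorem divByMonic_divByMonic (hp : p.Monic) (hq : q.Monic) (f : R[X]) :
    f /ₘ p /ₘ q = f /ₘ (p * q) := by
  nontriviality R
  refine ((div_modByMonic_unique _ (f %ₘ p + p * (f /ₘ p %ₘ q)) (hp.mul hq) ⟨?_, ?_⟩).1).symm
  · rw [add_assoc, mul_assoc, ← mul_add, modByMonic_add_div, modByMonic_add_div]
  · have hpq : (p * q).degree = q.degree + p.degree := by rw [mul_comm, hp.degree_mul]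
    refine (degree_add_le _ _).trans_lt (max_lt ?_ ?_)
    · calc (f %ₘ p).degree < p.degree := degree_modByMonic_lt _ hp
        _ ≤ q.degree + p.degree := le_add_of_nonneg_left (zero_le_degree_iff.2 hq.ne_zero)
        _ = (p * q).degree := hpq.symm
    · rw [mul_comm, hp.degree_mul, hpq]
      exact WithBot.add_lt_add_right (degree_ne_bot.2 hp.ne_zero) (degree_modByMonic_lt _ hq)

theorem degree_mul_divByMonic_lt (hq : q.Monic) {a b : R[X]} (ha : a.degree < q.degree)
    (hb : b.degree < q.degree) : (a * b /ₘ q).degree < q.degree := by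
  rcases eq_or_ne (a * b /ₘ q) 0 with hs | hs
  · rw [hs, degree_zero]
    exact bot_le.trans_lt ha
  have hab : a * b ≠ 0 := fun h => hs (by rw [h, zero_divByMonic])
  have ha' := natDegree_lt_natDegree (left_ne_zero_of_mul hab) ha
  have hb' := natDegree_lt_natDegree (right_ne_zero_of_mul hab) hb
  refine degree_lt_degree ?_
  rw [natDegree_divByMonic _ hq]
  have := natDegree_mul_le (p := a) (q := b)
  omega

end Polynomial

section QExpansion

variable {K : Type*} [Field K] {Q : K[X]}

@[simp]
theorem qCoeff_zero (i : ℕ) : qCoeff Q 0 i = 0 := by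
  simp [qCoeff]

theorem qCoeff_zero_eq_modByMonic (f : K[X]) : qCoeff Q f 0 = f %ₘ Q := by
  simp [qCoeff]

theorem degree_qCoeff_lt (hQ : Q.Monic) (f : K[X]) (i : ℕ) : (qCoeff Q f i).degree < Q.degree :=
  degree_modByMonic_lt _ hQ

theorem qCoeff_add (hQ : Q.Monic) (f g : K[X]) (i : ℕ) :
    qCoeff Q (f + g) i = qCoeff Q f i + qCoeff Q g i := by
  simp only [qCoeff, add_divByMonic (hQ.pow i), add_modByMonic]

theorem qCoeff_divByMonic_pow (hQ : Q.Monic) (f : K[X]) (n i : ℕ) :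
    qCoeff Q (f /ₘ Q ^ n) i = qCoeff Q f (i + n) := by
  rw [qCoeff, qCoeff, divByMonic_divByMonic (hQ.pow n) (hQ.pow i), ← pow_add, add_comm n]

theorem qCoeff_pow_mul_add (hQ : Q.Monic) (h : K[X]) (n i : ℕ) :
    qCoeff Q (Q ^ n * h) (i + n) = qCoeff Q h i := by
  rw [← qCoeff_divByMonic_pow hQ, mul_divByMonic_cancel_left _ (hQ.pow n)]

theorem qCoeff_pow_mul_self (hQ : Q.Monic) (h : K[X]) (n : ℕ) :
    qCoeff Q (Q ^ n * h) n = h %ₘ Q := by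
  simpa [qCoeff_zero_eq_modByMonic] using qCoeff_pow_mul_add hQ h n 0

theorem qCoeff_pow_mul_of_lt (hQ : Q.Monic) (h : K[X]) {n i : ℕ} (hi : i < n) :
    qCoeff Q (Q ^ n * h) i = 0 := by
  obtain ⟨k, rfl⟩ := Nat.exists_eq_add_of_lt hi
  rw [qCoeff, show Q ^ (i + k + 1) = Q ^ i * Q ^ (k + 1) by ring, mul_assoc,
    mul_divByMonic_cancel_left _ (hQ.pow i), modByMonic_eq_zero_iff_dvd hQ]
  exact dvd_mul_of_dvd_left (dvd_pow_self Q k.succ_ne_zero) h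

theorem divByMonic_pow_eq_qCoeff_add (hQ : Q.Monic) (f : K[X]) (n : ℕ) :
    f /ₘ Q ^ n = qCoeff Q f n + Q * (f /ₘ Q ^ (n + 1)) := by
  rw [pow_succ, ← divByMonic_divByMonic (hQ.pow n) hQ, qCoeff, modByMonic_add_div]

theorem qCoeff_eq_zero_of_degree_lt (hQ : Q.Monic) {f : K[X]} {i : ℕ}
    (h : f.degree < (Q ^ i).degree) : qCoeff Q f i = 0 := by
  rw [qCoeff, (divByMonic_eq_zero_iff (hQ.pow i)).2 h, zero_modByMonic]

theorem degree_lt_degree_pow (hQ : Q.Monic) (hd : 0 < Q.natDegree) {f : K[X]} {i : ℕ}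
    (h : f.natDegree < i) : f.degree < (Q ^ i).degree := by
  refine degree_le_natDegree.trans_lt ?_
  rw [degree_eq_natDegree (hQ.pow i).ne_zero, hQ.natDegree_pow]
  exact_mod_cast h.trans_le (Nat.le_mul_of_pos_right i hd)

theorem qCoeff_eq_zero_of_natDegree_lt (hQ : Q.Monic) (hd : 0 < Q.natDegree) {f : K[X]} {i : ℕ}
    (h : f.natDegree < i) : qCoeff Q f i = 0 :=
  qCoeff_eq_zero_of_degree_lt hQ (degree_lt_degree_pow hQ hd h)

theorem qCoeff_of_degree_lt (hQ : Q.Monic) {f : K[X]} (hf : f.degree < Q.degree) (i : ℕ) :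
    qCoeff Q f i = if i = 0 then f else 0 := by
  rcases i with _ | i
  · rw [qCoeff_zero_eq_modByMonic, (modByMonic_eq_self_iff hQ).2 hf, if_pos rfl]
  · rw [← qCoeff_divByMonic_pow hQ f 1, pow_one, (divByMonic_eq_zero_iff hQ).2 hf, qCoeff_zero,
      if_neg i.succ_ne_zero]

theorem sum_qCoeff_mul_pow_add_pow_mul (hQ : Q.Monic) (f : K[X]) (N : ℕ) :
    ∑ i ∈ range N, qCoeff Q f i * Q ^ i + Q ^ N * (f /ₘ Q ^ N) = f := by
  induction N with
  | zero => simp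
  | succ N ih =>
    rw [divByMonic_pow_eq_qCoeff_add hQ] at ih
    rw [sum_range_succ]
    linear_combination ih

theorem sum_qCoeff_mul_pow (hQ : Q.Monic) (hd : 0 < Q.natDegree) {f : K[X]} {N : ℕ}
    (hN : f.natDegree < N) : ∑ i ∈ range N, qCoeff Q f i * Q ^ i = f := by
  have h := sum_qCoeff_mul_pow_add_pow_mul hQ f N
  rwa [(divByMonic_eq_zero_iff (hQ.pow N)).2 (degree_lt_degree_pow hQ hd hN), mul_zero,
    add_zero] at h

theorem qCoeff_modByMonic_pow (hQ : Q.Monic) (f : K[X]) (n i : ℕ) :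
    qCoeff Q (f %ₘ Q ^ n) i = if i < n then qCoeff Q f i else 0 := by
  split_ifs with hi
  · conv_rhs => rw [← modByMonic_add_div f (Q ^ n)]
    rw [qCoeff_add hQ, qCoeff_pow_mul_of_lt hQ _ hi, add_zero]
  · refine qCoeff_eq_zero_of_degree_lt hQ ((degree_modByMonic_lt _ (hQ.pow n)).trans_le ?_)
    rw [degree_eq_natDegree (hQ.pow n).ne_zero, degree_eq_natDegree (hQ.pow i).ne_zero,
      hQ.natDegree_pow, hQ.natDegree_pow]
    exact_mod_cast Nat.mul_le_mul_right _ (not_lt.1 hi)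

end QExpansion

section Truncation

variable {K : Type*} [Field K] {Γ : Type*} [AddCommGroup Γ] [LinearOrder Γ] [IsOrderedAddMonoid Γ]
  (v : AddValuation K[X] (WithTop Γ)) {Q : K[X]}

theorem le_trunc_iff (hQ : Q.Monic) (hd : 0 < Q.natDegree) {f : K[X]} {t : WithTop Γ} :
    t ≤ trunc v Q f ↔ ∀ i, t ≤ v (qCoeff Q f i * Q ^ i) := by
  refine ⟨fun h i => ?_, fun h => Finset.le_inf fun i _ => h i⟩
  rcases le_or_gt i f.natDegree with hi | hi
  · exact h.trans (inf_le (mem_range_succ_iff.2 hi))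
  · simp [qCoeff_eq_zero_of_natDegree_lt hQ hd hi]

theorem trunc_le (hQ : Q.Monic) (hd : 0 < Q.natDegree) (f : K[X]) (i : ℕ) :
    trunc v Q f ≤ v (qCoeff Q f i * Q ^ i) :=
  (le_trunc_iff v hQ hd).1 le_rfl i

theorem exists_val_qCoeff_eq_trunc (f : K[X]) : ∃ i, v (qCoeff Q f i * Q ^ i) = trunc v Q f := by
  obtain ⟨i, -, hi⟩ := exists_mem_eq_inf (range (f.natDegree + 1)) nonempty_range_add_one
    fun i => v (qCoeff Q f i * Q ^ i)
  exact ⟨i, hi.symm⟩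

theorem lt_trunc_iff (hQ : Q.Monic) (hd : 0 < Q.natDegree) {f : K[X]} {t : WithTop Γ} :
    t < trunc v Q f ↔ ∀ i, t < v (qCoeff Q f i * Q ^ i) := by
  refine ⟨fun h i => h.trans_le (trunc_le v hQ hd f i), fun h => ?_⟩
  obtain ⟨i, hi⟩ := exists_val_qCoeff_eq_trunc v (Q := Q) f
  exact hi ▸ h i

theorem exists_first_val_qCoeff_eq_trunc (hQ : Q.Monic) (hd : 0 < Q.natDegree) (f : K[X]) :
    ∃ n, v (qCoeff Q f n * Q ^ n) = trunc v Q f ∧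
      ∀ i < n, trunc v Q f < v (qCoeff Q f i * Q ^ i) := by
  classical
  have h := exists_val_qCoeff_eq_trunc v (Q := Q) f
  exact ⟨Nat.find h, Nat.find_spec h, fun i hi =>
    (trunc_le v hQ hd f i).lt_of_ne' (Nat.find_min h hi)⟩

@[simp]
theorem trunc_zero : trunc v Q 0 = ⊤ := by
  simp [trunc]

theorem trunc_one (hQ : Q.Monic) (hd : 0 < Q.natDegree) : trunc v Q 1 = 0 := by
  have h1 : (1 : K[X]).degree < Q.degree := by
    rw [degree_one, degree_eq_natDegree hQ.ne_zero]
    exact_mod_cast hd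
  simp [trunc, qCoeff_zero_eq_modByMonic, (modByMonic_eq_self_iff hQ).2 h1]

theorem min_le_trunc_add (hQ : Q.Monic) (hd : 0 < Q.natDegree) (f g : K[X]) :
    min (trunc v Q f) (trunc v Q g) ≤ trunc v Q (f + g) := by
  rw [le_trunc_iff v hQ hd]
  intro i
  rw [qCoeff_add hQ, add_mul]
  exact v.map_le_add ((min_le_left _ _).trans (trunc_le v hQ hd f i))
    ((min_le_right _ _).trans (trunc_le v hQ hd g i))

theorem le_trunc_sum (hQ : Q.Monic) (hd : 0 < Q.natDegree) {ι : Type*} {s : Finset ι}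
    {F : ι → K[X]} {t : WithTop Γ} (h : ∀ i ∈ s, t ≤ trunc v Q (F i)) :
    t ≤ trunc v Q (∑ i ∈ s, F i) := by
  induction s using Finset.cons_induction with
  | empty => simp
  | cons i s hi ih =>
    rw [sum_cons]
    exact (le_min (h i (mem_cons_self i s)) (ih fun j hj => h j (mem_cons_of_mem hj))).trans
      (min_le_trunc_add v hQ hd _ _)

theorem val_pow_add_trunc_le (hQ : Q.Monic) (hd : 0 < Q.natDegree) (n : ℕ) (f : K[X]) :
    v (Q ^ n) + trunc v Q f ≤ trunc v Q (Q ^ n * f) := by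
  rw [le_trunc_iff v hQ hd]
  intro i
  rcases lt_or_ge i n with hi | hi
  · simp [qCoeff_pow_mul_of_lt hQ f hi]
  · obtain ⟨m, rfl⟩ := Nat.exists_eq_add_of_le' hi
    rw [qCoeff_pow_mul_add hQ, pow_add, ← mul_assoc, v.map_mul, add_comm]
    gcongr
    exact trunc_le v hQ hd f m

theorem trunc_le_trunc_pow_mul_divByMonic (hQ : Q.Monic) (hd : 0 < Q.natDegree) (f : K[X])
    (n : ℕ) : trunc v Q f ≤ trunc v Q (Q ^ n * (f /ₘ Q ^ n)) := by
  rw [le_trunc_iff v hQ hd]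
  intro i
  rcases lt_or_ge i n with hi | hi
  · simp [qCoeff_pow_mul_of_lt hQ _ hi]
  · obtain ⟨m, rfl⟩ := Nat.exists_eq_add_of_le' hi
    rw [qCoeff_pow_mul_add hQ, qCoeff_divByMonic_pow hQ]
    exact trunc_le v hQ hd f _

theorem lt_trunc_modByMonic_pow (hQ : Q.Monic) (hd : 0 < Q.natDegree) {f : K[X]} {n : ℕ}
    {t : WithTop Γ} (ht : t ≠ ⊤) (h : ∀ i < n, t < v (qCoeff Q f i * Q ^ i)) :
    t < trunc v Q (f %ₘ Q ^ n) := by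
  rw [lt_trunc_iff v hQ hd]
  intro i
  rw [qCoeff_modByMonic_pow hQ]
  split_ifs with hi
  · exact h i hi
  · simpa using ht.lt_top

end Truncation

section HasseDerivBounds

variable {Γ : Type*} [AddCommGroup Γ] [LinearOrder Γ] [IsOrderedAddMonoid Γ]

section CommRing

variable {R : Type*} [CommRing R] (v : AddValuation R[X] (WithTop Γ))

theorem val_lt_hasseDeriv_mul {e : Γ} {f g : R[X]}
    (hf : ∀ b, 1 ≤ b → v f < v (hasseDeriv b f) + ((b • e : Γ) : WithTop Γ))
    (hg : ∀ b, 1 ≤ b → v g < v (hasseDeriv b g) + ((b • e : Γ) : WithTop Γ)) {b : ℕ}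
    (hb : 1 ≤ b) : v (f * g) < v (hasseDeriv b (f * g)) + ((b • e : Γ) : WithTop Γ) := by
  have hle : ∀ h : R[X], (∀ b, 1 ≤ b → v h < v (hasseDeriv b h) + ((b • e : Γ) : WithTop Γ)) →
      ∀ b, v h ≤ v (hasseDeriv b h) + ((b • e : Γ) : WithTop Γ) := by
    intro h hh b
    rcases Nat.eq_zero_or_pos b with rfl | hb
    · simp
    · exact (hh b hb).le
  have hvf := (hf 1 le_rfl).ne_top
  have hvg := (hg 1 le_rfl).ne_top
  rw [hasseDeriv_mul]
  refine v.lt_map_sum_add (by simpa using And.intro hvf hvg) fun ⟨p, q⟩ hpq => ?_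
  rw [HasAntidiagonal.mem_antidiagonal] at hpq
  rw [v.map_mul, v.map_mul, ← hpq, add_nsmul, WithTop.coe_add, add_add_add_comm]
  rcases Nat.eq_zero_or_pos p with rfl | hp
  · exact WithTop.add_lt_add_of_le_of_lt hvf (hle f hf 0) (hg q (by omega))
  · exact WithTop.add_lt_add_of_lt_of_le hvg (hf p hp) (hle g hg q)

theorem val_hasseDeriv_mul_add_eq {e : Γ} {f g : R[X]} {b₀ : ℕ}
    (hf : ∀ b, v f ≤ v (hasseDeriv b f) + ((b • e : Γ) : WithTop Γ))
    (hfb₀ : v (hasseDeriv b₀ f) + ((b₀ • e : Γ) : WithTop Γ) = v f)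
    (hg : ∀ b, 1 ≤ b → v g < v (hasseDeriv b g) + ((b • e : Γ) : WithTop Γ))
    (hfg : v (f * g) ≠ ⊤) :
    v (hasseDeriv b₀ (f * g)) + ((b₀ • e : Γ) : WithTop Γ) = v (f * g) := by
  have hvf : v f ≠ ⊤ := (WithTop.add_ne_top.1 (v.map_mul f g ▸ hfg)).1
  have hmem : (b₀, 0) ∈ antidiagonal b₀ := by simp
  rw [hasseDeriv_mul, ← add_sum_erase _ _ hmem]
  refine v.map_add_add_eq_of_lt WithTop.coe_ne_top ?_ ?_
  · rw [hasseDeriv_zero', v.map_mul, v.map_mul, add_right_comm, hfb₀]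
  refine v.lt_map_sum_add hfg fun ⟨p, q⟩ hpq => ?_
  obtain ⟨hne, hpq⟩ := mem_erase.1 hpq
  rw [HasAntidiagonal.mem_antidiagonal] at hpq
  have hq : 1 ≤ q := by
    by_contra! hq
    exact hne (by simp [show q = 0 by omega, ← hpq])
  rw [v.map_mul, v.map_mul, ← hpq, add_nsmul, WithTop.coe_add, add_add_add_comm]
  exact WithTop.add_lt_add_of_le_of_lt hvf (hf p) (hg q hq)

end CommRing

variable {K : Type*} [Field K] (v : AddValuation K[X] (WithTop Γ)) [Module ℚ Γ]

theorem epsAt_le_eps {f : K[X]} {b : ℕ} (hb : 1 ≤ b) : epsAt v f b ≤ eps v f := by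
  rcases le_or_gt b f.natDegree with h | h
  · exact le_sup (mem_Icc.2 ⟨hb, h⟩)
  · simp [epsAt, hasseDeriv_eq_zero_of_lt_natDegree f b h]

theorem epsAt_eq_coe {f : K[X]} {b : ℕ} {γ δ : Γ} (hγ : v f = γ) (hδ : v (hasseDeriv b f) = δ) :
    epsAt v f b = (((b : ℚ)⁻¹ • (γ - δ) : Γ) : WithTop Γ) := by
  simp [epsAt, hγ, hδ]

theorem epsAt_le_coe_iff {f : K[X]} {b : ℕ} {e : Γ} (hf : v f ≠ ⊤) (hb : 1 ≤ b) :
    epsAt v f b ≤ ((e : WithTop Γ) : WithBot (WithTop Γ)) ↔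
      v f ≤ v (hasseDeriv b f) + ((b • e : Γ) : WithTop Γ) := by
  obtain ⟨γ, hγ⟩ := WithTop.ne_top_iff_exists.1 hf
  rcases eq_or_ne (v (hasseDeriv b f)) ⊤ with h | h
  · simp [epsAt, h]
  obtain ⟨δ, hδ⟩ := WithTop.ne_top_iff_exists.1 h
  rw [epsAt_eq_coe v hγ.symm hδ.symm, ← hγ, ← hδ, ← WithTop.coe_add, WithBot.coe_le_coe,
    WithTop.coe_le_coe, WithTop.coe_le_coe, inv_natCast_smul_le_iff (by omega),
    sub_le_iff_le_add']

theorem epsAt_lt_coe_iff {f : K[X]} {b : ℕ} {e : Γ} (hf : v f ≠ ⊤) (hb : 1 ≤ b) :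
    epsAt v f b < ((e : WithTop Γ) : WithBot (WithTop Γ)) ↔
      v f < v (hasseDeriv b f) + ((b • e : Γ) : WithTop Γ) := by
  obtain ⟨γ, hγ⟩ := WithTop.ne_top_iff_exists.1 hf
  rcases eq_or_ne (v (hasseDeriv b f)) ⊤ with h | h
  · simp [epsAt, h, hf.lt_top]
  obtain ⟨δ, hδ⟩ := WithTop.ne_top_iff_exists.1 h
  rw [epsAt_eq_coe v hγ.symm hδ.symm, ← hγ, ← hδ, ← WithTop.coe_add, WithBot.coe_lt_coe,
    WithTop.coe_lt_coe, WithTop.coe_lt_coe, inv_natCast_smul_lt_iff (by omega),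
    sub_lt_iff_lt_add']

theorem val_le_hasseDeriv_of_eps_le {f : K[X]} {e : Γ} (hf : v f ≠ ⊤)
    (he : eps v f ≤ ((e : WithTop Γ) : WithBot (WithTop Γ))) (b : ℕ) :
    v f ≤ v (hasseDeriv b f) + ((b • e : Γ) : WithTop Γ) := by
  rcases Nat.eq_zero_or_pos b with rfl | hb
  · simp
  · exact (epsAt_le_coe_iff v hf hb).1 ((epsAt_le_eps v hb).trans he)

theorem val_lt_hasseDeriv_of_eps_lt {f : K[X]} {e : Γ} (hf : v f ≠ ⊤)
    (he : eps v f < ((e : WithTop Γ) : WithBot (WithTop Γ))) {b : ℕ} (hb : 1 ≤ b) :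
    v f < v (hasseDeriv b f) + ((b • e : Γ) : WithTop Γ) :=
  (epsAt_lt_coe_iff v hf hb).1 ((epsAt_le_eps v hb).trans_lt he)

theorem exists_val_hasseDeriv_eq_of_eps_eq {f : K[X]} {e : Γ} (hf : v f ≠ ⊤)
    (he : eps v f = ((e : WithTop Γ) : WithBot (WithTop Γ))) :
    ∃ b, 1 ≤ b ∧ v (hasseDeriv b f) + ((b • e : Γ) : WithTop Γ) = v f := by
  have hne : (Icc 1 f.natDegree).Nonempty := by
    by_contra h
    simp [eps, not_nonempty_iff_eq_empty.1 h] at he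
  obtain ⟨b, hb, hbe⟩ := exists_mem_eq_sup _ hne (epsAt v f)
  have hb1 := (mem_Icc.1 hb).1
  have hbe : epsAt v f b = ((e : WithTop Γ) : WithBot (WithTop Γ)) := hbe.symm.trans he
  refine ⟨b, hb1, le_antisymm ?_ ((epsAt_le_coe_iff v hf hb1).1 hbe.le)⟩
  exact not_lt.1 fun h => ((epsAt_lt_coe_iff v hf hb1).2 h).ne hbe

end HasseDerivBounds

namespace IsKeyPoly

variable {K : Type*} [Field K] {Γ : Type*} [AddCommGroup Γ] [LinearOrder Γ] [IsOrderedAddMonoid Γ]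
  [Module ℚ Γ] {v : AddValuation K[X] (WithTop Γ)} {Q : K[X]}

theorem monic (hQ : IsKeyPoly v Q) : Q.Monic := hQ.1

theorem eps_lt (hQ : IsKeyPoly v Q) {f : K[X]} (hf : f.degree < Q.degree) : eps v f < eps v Q :=
  lt_of_not_ge fun h => (hQ.2 f h).not_gt hf

theorem eps_ne_bot (hQ : IsKeyPoly v Q) : eps v Q ≠ ⊥ := by
  intro h
  have := hQ.eps_lt (f := 0)
    (by rw [degree_zero]; exact bot_lt_iff_ne_bot.2 (degree_ne_bot.2 hQ.monic.ne_zero))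
  simp [h] at this

theorem natDegree_pos (hQ : IsKeyPoly v Q) : 0 < Q.natDegree := by
  by_contra! h
  exact hQ.eps_ne_bot (by simp [eps, show Q.natDegree = 0 by omega])

theorem val_ne_top (hQ : IsKeyPoly v Q) {f : K[X]} (hf : f ≠ 0) (hfd : f.degree < Q.degree) :
    v f ≠ ⊤ := by
  intro htop
  have hlead : v (hasseDeriv f.natDegree f) ≠ ⊤ := by
    rw [hasseDeriv_natDegree_eq_C]
    exact v.map_ne_top_of_isUnit (isUnit_C.2 (leadingCoeff_ne_zero.2 hf).isUnit)
  rcases Nat.eq_zero_or_pos f.natDegree with h0 | hpos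
  · rw [h0, hasseDeriv_zero'] at hlead
    exact hlead htop
  · have htop' : epsAt v f f.natDegree = ⊤ := by simp [epsAt, hlead, htop]
    exact (hQ.eps_lt hfd).not_ge (htop' ▸ epsAt_le_eps v hpos |>.trans' le_top)

theorem exists_eps_eq_coe (hQ : IsKeyPoly v Q) (hvQ : v Q ≠ ⊤) :
    ∃ e : Γ, eps v Q = ((e : WithTop Γ) : WithBot (WithTop Γ)) := by
  obtain ⟨b, -, hb⟩ := exists_mem_eq_sup _ ⟨1, mem_Icc.2 ⟨le_rfl, hQ.natDegree_pos⟩⟩ (epsAt v Q)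
  obtain ⟨γ, hγ⟩ := WithTop.ne_top_iff_exists.1 hvQ
  have hδ : v (hasseDeriv b Q) ≠ ⊤ := fun h => hQ.eps_ne_bot (by simp [eps, hb, epsAt, h])
  obtain ⟨δ, hδ⟩ := WithTop.ne_top_iff_exists.1 hδ
  exact ⟨_, hb.trans (epsAt_eq_coe v hγ.symm hδ.symm)⟩

theorem val_lt_hasseDeriv (hQ : IsKeyPoly v Q) {e : Γ}
    (he : eps v Q = ((e : WithTop Γ) : WithBot (WithTop Γ))) {f : K[X]} (hf : f ≠ 0)
    (hfd : f.degree < Q.degree) {b : ℕ} (hb : 1 ≤ b) :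
    v f < v (hasseDeriv b f) + ((b • e : Γ) : WithTop Γ) :=
  val_lt_hasseDeriv_of_eps_lt v (hQ.val_ne_top hf hfd) (he ▸ hQ.eps_lt hfd) hb

theorem val_modByMonic_lt (hQ : IsKeyPoly v Q) {a b : K[X]} (ha : a.degree < Q.degree)
    (hb : b.degree < Q.degree) (hs : a * b /ₘ Q ≠ 0) :
    v (a * b %ₘ Q) < v (Q * (a * b /ₘ Q)) := by
  set r := a * b %ₘ Q
  set s := a * b /ₘ Q
  have hab : r + Q * s = a * b := modByMonic_add_div _ _
  have hab0 : a * b ≠ 0 := fun h => hs (by simp [s, h])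
  have ha0 := left_ne_zero_of_mul hab0
  have hb0 := right_ne_zero_of_mul hab0
  have hsd := degree_mul_divByMonic_lt hQ.monic ha hb
  have hvab : v (a * b) ≠ ⊤ := by
    rw [v.map_mul]
    exact WithTop.add_ne_top.2 ⟨hQ.val_ne_top ha0 ha, hQ.val_ne_top hb0 hb⟩
  by_contra! hle
  have hmin : v (Q * s) ≤ v (a * b) := hab ▸ v.map_le_add hle le_rfl
  rcases eq_or_ne (v Q) ⊤ with hQtop | hQtop
  · exact hvab (top_le_iff.1 (by simpa [v.map_mul, hQtop] using hmin))
  obtain ⟨e, he⟩ := hQ.exists_eps_eq_coe hQtop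
  obtain ⟨b₀, hb₀, hQb₀⟩ := exists_val_hasseDeriv_eq_of_eps_eq v hQtop he
  have hQs : v (hasseDeriv b₀ (Q * s)) + ((b₀ • e : Γ) : WithTop Γ) = v (Q * s) :=
    val_hasseDeriv_mul_add_eq v (val_le_hasseDeriv_of_eps_le v hQtop he.le) hQb₀
      (fun _ => hQ.val_lt_hasseDeriv he hs hsd) (ne_top_of_le_ne_top hvab hmin)
  have hA : v (hasseDeriv b₀ (a * b)) + ((b₀ • e : Γ) : WithTop Γ) = v (Q * s) := by
    rw [← hab, map_add, add_comm (hasseDeriv b₀ r)]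
    refine v.map_add_add_eq_of_lt WithTop.coe_ne_top hQs ?_
    rcases eq_or_ne r 0 with hr | hr
    · simpa [hr] using (ne_top_of_le_ne_top hvab hmin).lt_top
    · exact hle.trans_lt (hQ.val_lt_hasseDeriv he hr (degree_modByMonic_lt _ hQ.monic) hb₀)
  have hB : v (a * b) < v (hasseDeriv b₀ (a * b)) + ((b₀ • e : Γ) : WithTop Γ) :=
    val_lt_hasseDeriv_mul v (fun _ => hQ.val_lt_hasseDeriv he ha0 ha)
      (fun _ => hQ.val_lt_hasseDeriv he hb0 hb) hb₀
  exact (hB.trans_eq hA).not_ge hmin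

theorem val_modByMonic_mul (hQ : IsKeyPoly v Q) {a b : K[X]} (ha : a.degree < Q.degree)
    (hb : b.degree < Q.degree) : v (a * b %ₘ Q) = v (a * b) := by
  conv_rhs => rw [← modByMonic_add_div (a * b) Q]
  rcases eq_or_ne (a * b /ₘ Q) 0 with hs | hs
  · rw [hs, mul_zero, add_zero]
  · exact (v.map_add_eq_of_lt_left (hQ.val_modByMonic_lt ha hb hs)).symm

theorem val_le_trunc_mul (hQ : IsKeyPoly v Q) {a b : K[X]} (ha : a.degree < Q.degree)
    (hb : b.degree < Q.degree) : v (a * b) ≤ trunc v Q (a * b) := by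
  rw [le_trunc_iff v hQ.monic hQ.natDegree_pos]
  rintro (_ | i)
  · rw [qCoeff_zero_eq_modByMonic, pow_zero, mul_one, hQ.val_modByMonic_mul ha hb]
  rw [← qCoeff_divByMonic_pow hQ.monic _ 1, pow_one,
    qCoeff_of_degree_lt hQ.monic (degree_mul_divByMonic_lt hQ.monic ha hb)]
  rcases i with _ | i
  · rcases eq_or_ne (a * b /ₘ Q) 0 with hs | hs
    · simp [hs]
    · rw [if_pos rfl, pow_one, mul_comm (a * b /ₘ Q), ← hQ.val_modByMonic_mul ha hb]
      exact (hQ.val_modByMonic_lt ha hb hs).le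
  · simp

theorem trunc_add_trunc_le_trunc_mul (hQ : IsKeyPoly v Q) (f g : K[X]) :
    trunc v Q f + trunc v Q g ≤ trunc v Q (f * g) := by
  have hm := hQ.monic
  have hd := hQ.natDegree_pos
  have hterm : ∀ i j, trunc v Q f + trunc v Q g ≤
      trunc v Q (qCoeff Q f i * Q ^ i * (qCoeff Q g j * Q ^ j)) := fun i j =>
    calc trunc v Q f + trunc v Q g
        ≤ v (qCoeff Q f i * Q ^ i) + v (qCoeff Q g j * Q ^ j) :=
          add_le_add (trunc_le v hm hd f i) (trunc_le v hm hd g j)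
      _ = v (Q ^ (i + j)) + v (qCoeff Q f i * qCoeff Q g j) := by
          simp only [v.map_mul, pow_add]
          abel
      _ ≤ v (Q ^ (i + j)) + trunc v Q (qCoeff Q f i * qCoeff Q g j) := by
          gcongr
          exact hQ.val_le_trunc_mul (degree_qCoeff_lt hm f i) (degree_qCoeff_lt hm g j)
      _ ≤ trunc v Q (Q ^ (i + j) * (qCoeff Q f i * qCoeff Q g j)) :=
          val_pow_add_trunc_le v hm hd _ _
      _ = trunc v Q (qCoeff Q f i * Q ^ i * (qCoeff Q g j * Q ^ j)) := by ring_nf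
  calc trunc v Q f + trunc v Q g
      ≤ trunc v Q (∑ i ∈ range (f.natDegree + 1), ∑ j ∈ range (g.natDegree + 1),
          qCoeff Q f i * Q ^ i * (qCoeff Q g j * Q ^ j)) :=
        le_trunc_sum v hm hd fun i _ => le_trunc_sum v hm hd fun j _ => hterm i j
    _ = trunc v Q (f * g) := by
        rw [← sum_mul_sum, sum_qCoeff_mul_pow hm hd (Nat.lt_succ_self _),
          sum_qCoeff_mul_pow hm hd (Nat.lt_succ_self _)]

theorem trunc_mul_le (hQ : IsKeyPoly v Q) (f g : K[X]) :
    trunc v Q (f * g) ≤ trunc v Q f + trunc v Q g := by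
  have hm := hQ.monic
  have hd := hQ.natDegree_pos
  rcases eq_or_ne (trunc v Q f + trunc v Q g) ⊤ with hT | hT
  · exact hT ▸ le_top
  obtain ⟨hTf, hTg⟩ := WithTop.add_ne_top.1 hT
  obtain ⟨i, hfi, hfi_lt⟩ := exists_first_val_qCoeff_eq_trunc v hm hd f
  obtain ⟨j, hgj, hgj_lt⟩ := exists_first_val_qCoeff_eq_trunc v hm hd g
  set E := f %ₘ Q ^ i * g + Q ^ i * (f /ₘ Q ^ i) * (g %ₘ Q ^ j)
  have hE : trunc v Q f + trunc v Q g < trunc v Q E := by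
    refine (lt_min ?_ ?_).trans_le (min_le_trunc_add v hm hd _ _)
    · calc _ < trunc v Q (f %ₘ Q ^ i) + trunc v Q g :=
            WithTop.add_lt_add_right hTg (lt_trunc_modByMonic_pow v hm hd hTf hfi_lt)
        _ ≤ _ := hQ.trunc_add_trunc_le_trunc_mul _ _
    · calc _ < trunc v Q (Q ^ i * (f /ₘ Q ^ i)) + trunc v Q (g %ₘ Q ^ j) :=
            WithTop.add_lt_add_of_le_of_lt hTf (trunc_le_trunc_pow_mul_divByMonic v hm hd f i)
              (lt_trunc_modByMonic_pow v hm hd hTg hgj_lt)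
        _ ≤ _ := hQ.trunc_add_trunc_le_trunc_mul _ _
  have hfg : f * g = E + Q ^ (i + j) * (f /ₘ Q ^ i * (g /ₘ Q ^ j)) := by
    have hf := modByMonic_add_div f (Q ^ i)
    have hg := modByMonic_add_div g (Q ^ j)
    linear_combination (-g) * hf - (Q ^ i * (f /ₘ Q ^ i)) * hg
  have hcoeff : qCoeff Q (f * g) (i + j) =
      qCoeff Q E (i + j) + qCoeff Q f i * qCoeff Q g j %ₘ Q := by
    rw [hfg, qCoeff_add hm, qCoeff_pow_mul_self hm, mul_modByMonic]
    rfl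
  have hval : v (qCoeff Q f i * qCoeff Q g j %ₘ Q * Q ^ (i + j)) = trunc v Q f + trunc v Q g := by
    rw [v.map_mul, hQ.val_modByMonic_mul (degree_qCoeff_lt hm f i) (degree_qCoeff_lt hm g j),
      ← hfi, ← hgj]
    simp only [v.map_mul, pow_add]
    abel
  calc trunc v Q (f * g) ≤ v (qCoeff Q (f * g) (i + j) * Q ^ (i + j)) := trunc_le v hm hd _ _
    _ = trunc v Q f + trunc v Q g := by
      rw [hcoeff, add_mul,
        v.map_add_eq_of_lt_right (hval ▸ hE.trans_le (trunc_le v hm hd E _)), hval]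

theorem trunc_mul (hQ : IsKeyPoly v Q) (f g : K[X]) :
    trunc v Q (f * g) = trunc v Q f + trunc v Q g :=
  (hQ.trunc_mul_le f g).antisymm (hQ.trunc_add_trunc_le_trunc_mul f g)

theorem isVal_trunc (hQ : IsKeyPoly v Q) : IsVal (trunc v Q) :=
  ⟨hQ.trunc_mul, min_le_trunc_add v hQ.monic hQ.natDegree_pos,
    trunc_one v hQ.monic hQ.natDegree_pos, trunc_zero v⟩

end IsKeyPoly

/-- **Proposition 2.6 of [f]**: if `Q` is a (Spivakovsky) key polynomial for `ν`,
then the `Q`-truncation `ν_Q` is a valuation on `K[x]`. -/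
theorem trunc_isVal_of_isKeyPoly {K : Type*} [Field K]
    {Γ : Type*} [AddCommGroup Γ] [LinearOrder Γ] [IsOrderedAddMonoid Γ] [Module ℚ Γ]
    (v : K[X] → WithTop Γ) (hv : IsVal v) (Q : K[X]) (hQ : IsKeyPoly v Q) :
    IsVal (trunc v Q) :=
  IsKeyPoly.isVal_trunc (v := hv.toAddValuation) hQ
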